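/- Let P, Q ∈ S^d₊, Γ ∈ S^k₊₊, and H ∈ ℝ^{k×d}. Then the Kalman gain operator satisfies |𝒦(Q) − 𝒦(P)| ≤ |Q − P| · |H| · |Γ⁻¹| · (1 + min(|P|, |Q|) · |H|² · |Γ⁻¹|). -/

import Mathlib

open MeasureTheory ProbabilityTheory Matrix
open scoped BigOperators

noncomputable section

/-- Euclidean norm of a vector `x ∈ ℝ^d`. -/
def vecNorm {d : ℕ} (x : Fin d → ℝ) : ℝ := Real.sqrt (∑ i, x i ^ 2)

/-- Operator (spectral) norm of a matrix, viewed as a linear map between Euclidean spaces. -/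
def opNorm {m n : ℕ} (M : Matrix (Fin m) (Fin n) ℝ) : ℝ :=
  ‖LinearMap.toContinuousLinearMap (Matrix.toEuclideanLin M)‖

/-- Effective dimension `r₂(Q) = Tr(Q)/|Q|`. -/
def effDim {d : ℕ} (Q : Matrix (Fin d) (Fin d) ℝ) : ℝ := Q.trace / opNorm Q

/-- `L^q` norm `(E |X|^q)^{1/q}` of a real random variable. -/
def LqNorm {Ω : Type*} [MeasurableSpace Ω] (P : Measure Ω) (q : ℝ) (X : Ω → ℝ) : ℝ :=
  (∫ ω, |X ω| ^ q ∂P) ^ (1 / q)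

/-- A random vector `X` is Gaussian with mean `m` and covariance `S`:
every linear functional of it is a real Gaussian with the corresponding parameters. -/
def IsGaussianVec {Ω : Type*} [MeasurableSpace Ω] {d : ℕ} (P : Measure Ω)
    (X : Ω → Fin d → ℝ) (m : Fin d → ℝ) (S : Matrix (Fin d) (Fin d) ℝ) : Prop :=
  ∀ v : Fin d → ℝ,
    P.map (fun ω => v ⬝ᵥ X ω)
      = gaussianReal (v ⬝ᵥ m) (Real.toNNReal (v ⬝ᵥ S.mulVec v))

/-- Sample mean of an ensemble of vectors. -/
def sampleMean {N d : ℕ} (v : Fin N → Fin d → ℝ) : Fin d → ℝ := (N : ℝ)⁻¹ • ∑ n, v n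

/-- `1/(N-1)`-normalized sample covariance of an ensemble of vectors. -/
def sampleCov {N d : ℕ} (v : Fin N → Fin d → ℝ) : Matrix (Fin d) (Fin d) ℝ :=
  ((N : ℝ) - 1)⁻¹ • ∑ n, vecMulVec (v n - sampleMean v) (v n - sampleMean v)

/-- `1/(N-1)`-normalized sample cross-covariance of two ensembles of vectors. -/
def sampleCrossCov {N d k : ℕ} (v : Fin N → Fin d → ℝ) (w : Fin N → Fin k → ℝ) :
    Matrix (Fin d) (Fin k) ℝ :=
  ((N : ℝ) - 1)⁻¹ • ∑ n, vecMulVec (v n - sampleMean v) (w n - sampleMean w)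

/-- Kalman gain operator `𝒦(C) = C Hᵀ (H C Hᵀ + Γ)⁻¹`. -/
def kGain {d k : ℕ} (H : Matrix (Fin k) (Fin d) ℝ) (Γ : Matrix (Fin k) (Fin k) ℝ)
    (C : Matrix (Fin d) (Fin d) ℝ) : Matrix (Fin d) (Fin k) ℝ :=
  C * Hᵀ * (H * C * Hᵀ + Γ)⁻¹

/-- Mean-update operator `ℳ(m, C; y) = m + 𝒦(C)(y − Hm)`. -/
def meanUpdate {d k : ℕ} (H : Matrix (Fin k) (Fin d) ℝ) (Γ : Matrix (Fin k) (Fin k) ℝ)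
    (m : Fin d → ℝ) (C : Matrix (Fin d) (Fin d) ℝ) (y : Fin k → ℝ) : Fin d → ℝ :=
  m + (kGain H Γ C).mulVec (y - H.mulVec m)

/-- Covariance-update operator `𝒞(C) = (I − 𝒦(C)H)C`. -/
def covUpdate {d k : ℕ} (H : Matrix (Fin k) (Fin d) ℝ) (Γ : Matrix (Fin k) (Fin k) ℝ)
    (C : Matrix (Fin d) (Fin d) ℝ) : Matrix (Fin d) (Fin d) ℝ :=
  (1 - kGain H Γ C * H) * C

/-- Kalman filter: `(KF ... j).1` is the analysis mean `μ⁽ʲ⁾` and `(KF ... j).2` the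
analysis covariance `Σ⁽ʲ⁾`. -/
def KF {d k : ℕ} (A : Matrix (Fin d) (Fin d) ℝ) (H : Matrix (Fin k) (Fin d) ℝ)
    (Ξ : Matrix (Fin d) (Fin d) ℝ) (Γ : Matrix (Fin k) (Fin k) ℝ)
    (μ0 : Fin d → ℝ) (S0 : Matrix (Fin d) (Fin d) ℝ) (y : ℕ → Fin k → ℝ) :
    ℕ → (Fin d → ℝ) × Matrix (Fin d) (Fin d) ℝ
  | 0 => (μ0, S0)
  | j + 1 =>
      let prev := KF A H Ξ Γ μ0 S0 y j
      let m := A.mulVec prev.1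
      let C := A * prev.2 * Aᵀ + Ξ
      (meanUpdate H Γ m C (y (j + 1)), covUpdate H Γ C)

-- Positive-semidefinite square root (junk value `0` off the psd matrices).
open Classical in
def matSqrt {d : ℕ} (S : Matrix (Fin d) (Fin d) ℝ) : Matrix (Fin d) (Fin d) ℝ :=
  if h : S.PosSemidef then
    (h.1.eigenvectorUnitary : Matrix (Fin d) (Fin d) ℝ) *
      diagonal ((↑) ∘ (√·) ∘ h.1.eigenvalues) * (star h.1.eigenvectorUnitary : Matrix (Fin d) (Fin d) ℝ)
  else 0

/-- The stochastic (perturbed-observation) REnKF, driven by the noise arrays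
`Z` (resampling, standard Gaussian), `ξ` (dynamics noise) and `η` (observation noise):
`(REnKF ... j ω).1 = μ̂⁽ʲ⁾(ω)` and `(REnKF ... j ω).2 = Σ̂⁽ʲ⁾(ω)`.
The resampled ensemble at time `j` is `μ̂⁽ʲ⁾ + Σ̂⁽ʲ⁾^{1/2} Z⁽ʲ⁺¹⁾ₙ`, which realizes
i.i.d. `N(μ̂⁽ʲ⁾, Σ̂⁽ʲ⁾)` draws conditionally on the past. -/
def REnKF {Ω : Type*} {d k N : ℕ} (A : Matrix (Fin d) (Fin d) ℝ) (H : Matrix (Fin k) (Fin d) ℝ)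
    (Γ : Matrix (Fin k) (Fin k) ℝ) (μ0 : Fin d → ℝ) (S0 : Matrix (Fin d) (Fin d) ℝ)
    (y : ℕ → Fin k → ℝ)
    (Z ξ : ℕ → Fin N → Ω → Fin d → ℝ) (η : ℕ → Fin N → Ω → Fin k → ℝ) :
    ℕ → Ω → (Fin d → ℝ) × Matrix (Fin d) (Fin d) ℝ
  | 0 => fun _ => (μ0, S0)
  | j + 1 => fun ω =>
      let prev := REnKF A H Γ μ0 S0 y Z ξ η j ω
      let uhat : Fin N → Fin d → ℝ :=
        fun n => A.mulVec (prev.1 + (matSqrt prev.2).mulVec (Z (j + 1) n ω)) + ξ (j + 1) n ω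
      let K := kGain H Γ (sampleCov uhat)
      let u' : Fin N → Fin d → ℝ :=
        fun n => (1 - K * H).mulVec (uhat n) + K.mulVec (y (j + 1) + η (j + 1) n ω)
      (sampleMean u', sampleCov u')

/-- Index type for the three mutually independent noise arrays. -/
def NoiseType (d k N : ℕ) : (ℕ × Fin N) ⊕ ((ℕ × Fin N) ⊕ (ℕ × Fin N)) → Type
  | Sum.inl _ => Fin d → ℝ
  | Sum.inr (Sum.inl _) => Fin d → ℝ
  | Sum.inr (Sum.inr _) => Fin k → ℝ

def noiseσ (d k N : ℕ) : ∀ i, MeasurableSpace (NoiseType d k N i)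
  | Sum.inl _ => (inferInstance : MeasurableSpace (Fin d → ℝ))
  | Sum.inr (Sum.inl _) => (inferInstance : MeasurableSpace (Fin d → ℝ))
  | Sum.inr (Sum.inr _) => (inferInstance : MeasurableSpace (Fin k → ℝ))

/-- The three noise arrays, bundled as a single indexed family of random variables. -/
def noiseFun {Ω : Type*} {d k N : ℕ} (Z ξ : ℕ → Fin N → Ω → Fin d → ℝ)
    (η : ℕ → Fin N → Ω → Fin k → ℝ) : ∀ i, Ω → NoiseType d k N i
  | Sum.inl p => Z p.1 p.2
  | Sum.inr (Sum.inl p) => ξ p.1 p.2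
  | Sum.inr (Sum.inr p) => η p.1 p.2

/-!
Write `S(C) = H C Hᵀ + Γ`. The resolvent identity `S(P)⁻¹ - S(Q)⁻¹ = S(P)⁻¹ (S(Q) - S(P)) S(Q)⁻¹`
with `S(Q) - S(P) = H (Q - P) Hᵀ` gives
`𝒦(Q) - 𝒦(P) = (Q - P) Hᵀ S(Q)⁻¹ - P Hᵀ S(P)⁻¹ H (Q - P) Hᵀ S(Q)⁻¹`.
Since `S(C) ≥ Γ`, the form of `S(C)` is coercive with constant `1 / |Γ⁻¹|`, so `|S(C)⁻¹| ≤ |Γ⁻¹|`,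
and submultiplicativity of the operator norm bounds both terms. Exchanging `P` and `Q` gives the
bound with `min (|P|) (|Q|)`.
-/

namespace Matrix

open scoped Matrix.Norms.L2Operator
open WithLp (toLp)

variable {n : Type*} [Fintype n] [DecidableEq n]

omit [DecidableEq n] in
lemma dotProduct_self_eq_norm_sq (x : n → ℝ) : x ⬝ᵥ x = ‖toLp 2 x‖ ^ 2 := by
  rw [← real_inner_self_eq_norm_sq, EuclideanSpace.inner_toLp_toLp, star_trivial]

omit [DecidableEq n] in
lemma dotProduct_le_norm_mul_norm (x y : n → ℝ) : x ⬝ᵥ y ≤ ‖toLp 2 x‖ * ‖toLp 2 y‖ := by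
  simpa [EuclideanSpace.inner_toLp_toLp, dotProduct_comm] using
    real_inner_le_norm (toLp 2 x) (toLp 2 y)

lemma dotProduct_mulVec_le_l2_opNorm (A : Matrix n n ℝ) (x : n → ℝ) :
    x ⬝ᵥ A *ᵥ x ≤ ‖A‖ * ‖toLp 2 x‖ ^ 2 :=
  calc x ⬝ᵥ A *ᵥ x ≤ ‖toLp 2 x‖ * ‖toLp 2 (A *ᵥ x)‖ := dotProduct_le_norm_mul_norm _ _
    _ ≤ ‖toLp 2 x‖ * (‖A‖ * ‖toLp 2 x‖) := by gcongr; exact A.l2_opNorm_mulVec (toLp 2 x)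
    _ = ‖A‖ * ‖toLp 2 x‖ ^ 2 := by ring

lemma PosDef.norm_sq_le_l2_opNorm_inv_mul {Γ : Matrix n n ℝ} (hΓ : Γ.PosDef) (x : n → ℝ) :
    ‖toLp 2 x‖ ^ 2 ≤ ‖Γ⁻¹‖ * (x ⬝ᵥ Γ *ᵥ x) := by
  have hΓT : Γᵀ = Γ := (isHermitian_iff_isSymm.mp hΓ.isHermitian).eq
  have hΓΓinv : Γ * Γ⁻¹ = 1 := mul_nonsing_inv Γ ((isUnit_iff_isUnit_det Γ).mp hΓ.isUnit)
  have hΓx : 0 ≤ x ⬝ᵥ Γ *ᵥ x := by simpa using hΓ.posSemidef.dotProduct_mulVec_nonneg x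
  -- Cauchy–Schwarz for the form of `Γ` at `x` and `Γ⁻¹ x`
  have hCS := (toBilin' Γ).apply_mul_apply_le_of_forall_zero_le
    (fun v => by simpa [toBilin'_apply'] using hΓ.posSemidef.dotProduct_mulVec_nonneg v)
    x (Γ⁻¹ *ᵥ x)
  have hxy : x ⬝ᵥ Γ *ᵥ Γ⁻¹ *ᵥ x = ‖toLp 2 x‖ ^ 2 := by
    rw [mulVec_mulVec, hΓΓinv, one_mulVec, dotProduct_self_eq_norm_sq]
  have hyx : Γ⁻¹ *ᵥ x ⬝ᵥ Γ *ᵥ x = ‖toLp 2 x‖ ^ 2 := by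
    rw [dotProduct_mulVec, ← hΓT, vecMul_transpose, hΓT, mulVec_mulVec, hΓΓinv, one_mulVec,
      dotProduct_self_eq_norm_sq]
  have hyy : Γ⁻¹ *ᵥ x ⬝ᵥ Γ *ᵥ Γ⁻¹ *ᵥ x ≤ ‖Γ⁻¹‖ * ‖toLp 2 x‖ ^ 2 := by
    rw [mulVec_mulVec, hΓΓinv, one_mulVec, dotProduct_comm]
    exact dotProduct_mulVec_le_l2_opNorm Γ⁻¹ x
  simp only [toBilin'_apply', hxy, hyx] at hCS
  rcases (norm_nonneg (toLp 2 x)).eq_or_lt with hx | hx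
  · rw [← hx, sq, zero_mul]
    exact mul_nonneg (norm_nonneg _) hΓx
  · refine le_of_mul_le_mul_right ?_ (pow_pos hx 2)
    nlinarith [mul_le_mul_of_nonneg_left hyy hΓx]

lemma l2_opNorm_le_of_mulVec_le {m : Type*} [Fintype m] {A : Matrix m n ℝ} {c : ℝ} (hc : 0 ≤ c)
    (hA : ∀ x, ‖toLp 2 (A *ᵥ x)‖ ≤ c * ‖toLp 2 x‖) : ‖A‖ ≤ c :=
  ContinuousLinearMap.opNorm_le_bound _ hc fun x => hA x.ofLp

lemma l2_opNorm_inv_le_of_coercive {M : Matrix n n ℝ} (hM : IsUnit M) {c : ℝ} (hc : 0 ≤ c)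
    (hcoer : ∀ x, ‖toLp 2 x‖ ^ 2 ≤ c * (x ⬝ᵥ M *ᵥ x)) : ‖M⁻¹‖ ≤ c := by
  refine l2_opNorm_le_of_mulVec_le hc fun y => ?_
  set x := M⁻¹ *ᵥ y
  have hMx : M *ᵥ x = y := by
    rw [mulVec_mulVec, mul_nonsing_inv M ((isUnit_iff_isUnit_det M).mp hM), one_mulVec]
  have hx : ‖toLp 2 x‖ ^ 2 ≤ c * ‖toLp 2 x‖ * ‖toLp 2 y‖ := by
    calc ‖toLp 2 x‖ ^ 2 ≤ c * (x ⬝ᵥ M *ᵥ x) := hcoer x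
      _ ≤ c * (‖toLp 2 x‖ * ‖toLp 2 y‖) := by
          gcongr; rw [hMx]; exact dotProduct_le_norm_mul_norm x y
      _ = c * ‖toLp 2 x‖ * ‖toLp 2 y‖ := by ring
  rcases (norm_nonneg (toLp 2 x)).eq_or_lt with h0 | h0
  · rw [← h0]; positivity
  · nlinarith

lemma PosDef.l2_opNorm_inv_add_le {S Γ : Matrix n n ℝ} (hS : S.PosSemidef) (hΓ : Γ.PosDef) :
    ‖(S + Γ)⁻¹‖ ≤ ‖Γ⁻¹‖ := by
  refine l2_opNorm_inv_le_of_coercive (hΓ.posSemidef_add hS).isUnit (norm_nonneg _) fun x => ?_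
  have hSx : 0 ≤ x ⬝ᵥ S *ᵥ x := by simpa using hS.dotProduct_mulVec_nonneg x
  calc ‖toLp 2 x‖ ^ 2 ≤ ‖Γ⁻¹‖ * (x ⬝ᵥ Γ *ᵥ x) := hΓ.norm_sq_le_l2_opNorm_inv_mul x
    _ ≤ ‖Γ⁻¹‖ * (x ⬝ᵥ (S + Γ) *ᵥ x) := by
        gcongr
        rw [add_mulVec, dotProduct_add]
        linarith

lemma l2_opNorm_transpose {m : Type*} [Fintype m] [DecidableEq m] (A : Matrix m n ℝ) :
    ‖Aᵀ‖ = ‖A‖ := by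
  rw [← conjTranspose_eq_transpose_of_trivial, l2_opNorm_conjTranspose]

lemma l2_opNorm_mul_le_of_le {m l : Type*} [Fintype m] [Fintype l] [DecidableEq l]
    {A : Matrix m n ℝ} {B : Matrix n l ℝ} {a b : ℝ} (hA : ‖A‖ ≤ a) (hB : ‖B‖ ≤ b) :
    ‖A * B‖ ≤ a * b :=
  (l2_opNorm_mul A B).trans (mul_le_mul hA hB (norm_nonneg B) ((norm_nonneg A).trans hA))

end Matrix

open scoped Matrix.Norms.L2Operator

lemma opNorm_eq_l2_opNorm {m n : ℕ} (M : Matrix (Fin m) (Fin n) ℝ) : opNorm M = ‖M‖ := rfl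

section KalmanGain

variable {d k : ℕ} {H : Matrix (Fin k) (Fin d) ℝ} {Γ : Matrix (Fin k) (Fin k) ℝ}
  {P Q : Matrix (Fin d) (Fin d) ℝ}

lemma kGain_sub_kGain (h : IsUnit (H * P * Hᵀ + Γ) ↔ IsUnit (H * Q * Hᵀ + Γ)) :
    kGain H Γ Q - kGain H Γ P
      = (Q - P) * Hᵀ * (H * Q * Hᵀ + Γ)⁻¹
        - P * Hᵀ * (H * P * Hᵀ + Γ)⁻¹ * (H * (Q - P) * Hᵀ) * (H * Q * Hᵀ + Γ)⁻¹ := by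
  have hdiff : H * Q * Hᵀ + Γ - (H * P * Hᵀ + Γ) = H * (Q - P) * Hᵀ := by
    rw [Matrix.mul_sub, Matrix.sub_mul]; abel
  have hres : P * Hᵀ * (H * P * Hᵀ + Γ)⁻¹ * (H * Q * Hᵀ + Γ - (H * P * Hᵀ + Γ))
        * (H * Q * Hᵀ + Γ)⁻¹ = P * Hᵀ * ((H * P * Hᵀ + Γ)⁻¹ - (H * Q * Hᵀ + Γ)⁻¹) := by
    rw [Matrix.inv_sub_inv h]; simp only [Matrix.mul_assoc]
  rw [← hdiff, hres]
  simp only [kGain, Matrix.sub_mul, Matrix.mul_sub]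
  abel

lemma norm_kGain_sub_kGain_le (hP : P.PosSemidef) (hQ : Q.PosSemidef) (hΓ : Γ.PosDef) :
    ‖kGain H Γ Q - kGain H Γ P‖
      ≤ ‖Q - P‖ * ‖H‖ * ‖Γ⁻¹‖ * (1 + ‖P‖ * ‖H‖ ^ 2 * ‖Γ⁻¹‖) := by
  have hHP : (H * P * Hᵀ).PosSemidef := by
    simpa using hP.mul_mul_conjTranspose_same H
  have hHQ : (H * Q * Hᵀ).PosSemidef := by
    simpa using hQ.mul_mul_conjTranspose_same H
  have hSP := hΓ.l2_opNorm_inv_add_le hHP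
  have hSQ := hΓ.l2_opNorm_inv_add_le hHQ
  have hHT := (l2_opNorm_transpose H).le
  rw [kGain_sub_kGain (iff_of_true (hΓ.posSemidef_add hHP).isUnit (hΓ.posSemidef_add hHQ).isUnit)]
  calc _ ≤ ‖(Q - P) * Hᵀ * (H * Q * Hᵀ + Γ)⁻¹‖
        + ‖P * Hᵀ * (H * P * Hᵀ + Γ)⁻¹ * (H * (Q - P) * Hᵀ) * (H * Q * Hᵀ + Γ)⁻¹‖ :=
        norm_sub_le _ _
    _ ≤ ‖Q - P‖ * ‖H‖ * ‖Γ⁻¹‖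
        + ‖P‖ * ‖H‖ * ‖Γ⁻¹‖ * (‖H‖ * ‖Q - P‖ * ‖H‖) * ‖Γ⁻¹‖ :=
        add_le_add
          (l2_opNorm_mul_le_of_le (l2_opNorm_mul_le_of_le le_rfl hHT) hSQ)
          (l2_opNorm_mul_le_of_le (l2_opNorm_mul_le_of_le
            (l2_opNorm_mul_le_of_le (l2_opNorm_mul_le_of_le le_rfl hHT) hSP)
            (l2_opNorm_mul_le_of_le (l2_opNorm_mul_le_of_le le_rfl le_rfl) hHT)) hSQ)
    _ = ‖Q - P‖ * ‖H‖ * ‖Γ⁻¹‖ * (1 + ‖P‖ * ‖H‖ ^ 2 * ‖Γ⁻¹‖) := by ring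

end KalmanGain

/-- **Lipschitz property of the Kalman gain operator**. -/
theorem kalman_gain_lipschitz (d k : ℕ) (P Q : Matrix (Fin d) (Fin d) ℝ)
    (hP : P.PosSemidef) (hQ : Q.PosSemidef)
    (Γ : Matrix (Fin k) (Fin k) ℝ) (hΓ : Γ.PosDef) (H : Matrix (Fin k) (Fin d) ℝ) :
    opNorm (kGain H Γ Q - kGain H Γ P)
      ≤ opNorm (Q - P) * opNorm H * opNorm Γ⁻¹
        * (1 + min (opNorm P) (opNorm Q) * opNorm H ^ 2 * opNorm Γ⁻¹) := by
  simp only [opNorm_eq_l2_opNorm]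
  rcases le_total ‖P‖ ‖Q‖ with hPQ | hQP
  · rw [min_eq_left hPQ]
    exact norm_kGain_sub_kGain_le hP hQ hΓ
  · rw [min_eq_right hQP, norm_sub_rev, norm_sub_rev Q]
    exact norm_kGain_sub_kGain_le hQ hP hΓ

end
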